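/- arXiv:1701.00567 — 4 statements merged into one kernel-verified Lean document; each statement's English description precedes it below -/
import Mathlib

section
/- Vertical composition of graded natural transformations between V-functors is well-defined and associative: if λ : F ⇒ G is u-graded and μ : G ⇒ H is v-graded, then (λ∘μ)_a := (λ_a ⊗ μ_a) ∘ (-∘_D-) defines a uv-graded natural transformation F ⇒ H, and this composition is associative. -/
open CategoryTheory MonoidalCategory

variable {V : Type*} [Category V] [MonoidalCategory V] [BraidedCategory V]
variable {C D : Type*} [EnrichedCategory V C] [EnrichedCategory V D]

/-- A `v`-graded natural transformation between `V`-functors `F, G : C → D`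
is a family `λ_a : v ⟶ D(F a → G a)` satisfying the braided naturality square. -/
def IsGradedNatTrans (v : V) (F G : EnrichedFunctor V C D)
    (lam : ∀ a : C, v ⟶ (F.obj a ⟶[V] G.obj a)) : Prop :=
  ∀ a b : C,
    (lam a ⊗ₘ G.map a b) ≫ eComp V (F.obj a) (G.obj a) (G.obj b) =
      (β_ v (a ⟶[V] b)).hom ≫ (F.map a b ⊗ₘ lam b) ≫
        eComp V (F.obj a) (F.obj b) (G.obj b)

/-- Vertical composition of graded families. -/
def vcomp {u v : V} {F G H : EnrichedFunctor V C D}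
    (lam : ∀ a : C, u ⟶ (F.obj a ⟶[V] G.obj a))
    (mu : ∀ a : C, v ⟶ (G.obj a ⟶[V] H.obj a)) :
    ∀ a : C, u ⊗ v ⟶ (F.obj a ⟶[V] H.obj a) :=
  fun a => (lam a ⊗ₘ mu a) ≫ eComp V (F.obj a) (G.obj a) (H.obj a)

set_option linter.unusedSectionVars false

section Aux
variable {D' : Type*} [EnrichedCategory V D']

private lemma whisk_left_comp' {p q q' B : V} {A : V} (f : p ⟶ A) (m : q ⟶ q') (y : q' ⟶ B) :
    (f ⊗ₘ m ≫ y) = p ◁ m ≫ (f ⊗ₘ y) := by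
  simp only [MonoidalCategory.tensorHom_def, MonoidalCategory.whiskerLeft_comp]
  rw [← whisker_exchange_assoc]

private lemma whisk_right_comp' {p p' q B : V} {A : V} (m : p ⟶ p') (x : p' ⟶ A) (h : q ⟶ B) :
    ((m ≫ x) ⊗ₘ h) = m ▷ q ≫ (x ⊗ₘ h) := by
  simp only [MonoidalCategory.tensorHom_def, comp_whiskerRight, Category.assoc]

private lemma hcomp' {X Y Z W : D'} {p q r : V} (f : p ⟶ (X ⟶[V] Y)) (g : q ⟶ (Y ⟶[V] Z))
    (h : r ⟶ (Z ⟶[V] W)) :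
    (((f ⊗ₘ g) ≫ eComp V X Y Z) ⊗ₘ h) ≫ eComp V X Z W =
      (α_ p q r).hom ≫ (f ⊗ₘ ((g ⊗ₘ h) ≫ eComp V Y Z W)) ≫ eComp V X Y W := by
  calc (((f ⊗ₘ g) ≫ eComp V X Y Z) ⊗ₘ h) ≫ eComp V X Z W
      = ((f ⊗ₘ g) ⊗ₘ h) ≫ eComp V X Y Z ▷ _ ≫ eComp V X Z W := by
        rw [tensorHom_def ((f ⊗ₘ g) ≫ eComp V X Y Z) h, tensorHom_def (f ⊗ₘ g) h,
          comp_whiskerRight]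
        simp only [Category.assoc]
        rw [← whisker_exchange_assoc]
    _ = ((f ⊗ₘ g) ⊗ₘ h) ≫ (α_ _ _ _).hom ≫ _ ◁ eComp V Y Z W ≫ eComp V X Y W := by
        rw [e_assoc']
    _ = (α_ p q r).hom ≫ (f ⊗ₘ (g ⊗ₘ h)) ≫ _ ◁ eComp V Y Z W ≫ eComp V X Y W := by
        rw [associator_naturality_assoc]
    _ = (α_ p q r).hom ≫ (f ⊗ₘ ((g ⊗ₘ h) ≫ eComp V Y Z W)) ≫ eComp V X Y W := by
        rw [tensorHom_def f ((g ⊗ₘ h) ≫ eComp V Y Z W), tensorHom_def f (g ⊗ₘ h)]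
        simp

end Aux

/-- Vertical composition of graded natural transformations is well defined
(the vertical composite of a `u`-graded and a `v`-graded natural transformation
is a `u ⊗ v`-graded natural transformation) and associative. -/
theorem vcomp_isGradedNatTrans_and_assoc :
    (∀ (u v : V) (F G H : EnrichedFunctor V C D)
      (lam : ∀ a : C, u ⟶ (F.obj a ⟶[V] G.obj a))
      (mu : ∀ a : C, v ⟶ (G.obj a ⟶[V] H.obj a)),
      IsGradedNatTrans u F G lam → IsGradedNatTrans v G H mu →
        IsGradedNatTrans (u ⊗ v) F H (vcomp lam mu)) ∧
    (∀ (u v w : V) (F G H K : EnrichedFunctor V C D)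
      (lam : ∀ a : C, u ⟶ (F.obj a ⟶[V] G.obj a))
      (mu : ∀ a : C, v ⟶ (G.obj a ⟶[V] H.obj a))
      (nu : ∀ a : C, w ⟶ (H.obj a ⟶[V] K.obj a)),
      IsGradedNatTrans u F G lam → IsGradedNatTrans v G H mu →
      IsGradedNatTrans w H K nu →
        ∀ a : C, vcomp (vcomp lam mu) nu a =
          (α_ u v w).hom ≫ vcomp lam (vcomp mu nu) a) := by
  constructor
  · intro u v F G H lam mu hl hm a b
    dsimp only [vcomp, IsGradedNatTrans] at *
    calc (((lam a ⊗ₘ mu a) ≫ eComp V (F.obj a) (G.obj a) (H.obj a)) ⊗ₘ H.map a b) ≫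
            eComp V (F.obj a) (H.obj a) (H.obj b)
        = (α_ u v _).hom ≫ (lam a ⊗ₘ ((mu a ⊗ₘ H.map a b) ≫
            eComp V (G.obj a) (H.obj a) (H.obj b))) ≫
            eComp V (F.obj a) (G.obj a) (H.obj b) := hcomp' _ _ _
      _ = (α_ u v _).hom ≫ (lam a ⊗ₘ ((β_ v _).hom ≫ (G.map a b ⊗ₘ mu b) ≫
            eComp V (G.obj a) (G.obj b) (H.obj b))) ≫
            eComp V (F.obj a) (G.obj a) (H.obj b) := by rw [hm a b]
      _ = (α_ u v _).hom ≫ u ◁ (β_ v _).hom ≫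
            (lam a ⊗ₘ ((G.map a b ⊗ₘ mu b) ≫
              eComp V (G.obj a) (G.obj b) (H.obj b))) ≫
            eComp V (F.obj a) (G.obj a) (H.obj b) := by
          rw [whisk_left_comp']; simp only [Category.assoc]
      _ = (α_ u v _).hom ≫ u ◁ (β_ v _).hom ≫ (α_ u _ v).inv ≫
            (((lam a ⊗ₘ G.map a b) ≫ eComp V (F.obj a) (G.obj a) (G.obj b)) ⊗ₘ mu b) ≫
            eComp V (F.obj a) (G.obj b) (H.obj b) := by
          rw [hcomp' (lam a) (G.map a b) (mu b), Iso.inv_hom_id_assoc]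
      _ = (α_ u v _).hom ≫ u ◁ (β_ v _).hom ≫ (α_ u _ v).inv ≫
            (((β_ u _).hom ≫ (F.map a b ⊗ₘ lam b) ≫
              eComp V (F.obj a) (F.obj b) (G.obj b)) ⊗ₘ mu b) ≫
            eComp V (F.obj a) (G.obj b) (H.obj b) := by rw [hl a b]
      _ = (α_ u v _).hom ≫ u ◁ (β_ v _).hom ≫ (α_ u _ v).inv ≫
            (β_ u _).hom ▷ v ≫
            (((F.map a b ⊗ₘ lam b) ≫ eComp V (F.obj a) (F.obj b) (G.obj b)) ⊗ₘ mu b) ≫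
            eComp V (F.obj a) (G.obj b) (H.obj b) := by
          rw [whisk_right_comp']; simp only [Category.assoc]
      _ = (α_ u v _).hom ≫ u ◁ (β_ v _).hom ≫ (α_ u _ v).inv ≫
            (β_ u _).hom ▷ v ≫ (α_ _ u v).hom ≫
            (F.map a b ⊗ₘ ((lam b ⊗ₘ mu b) ≫ eComp V (F.obj b) (G.obj b) (H.obj b))) ≫
            eComp V (F.obj a) (F.obj b) (H.obj b) := by
          rw [hcomp' (F.map a b) (lam b) (mu b)]
      _ = (β_ (u ⊗ v) _).hom ≫
            (F.map a b ⊗ₘ ((lam b ⊗ₘ mu b) ≫ eComp V (F.obj b) (G.obj b) (H.obj b))) ≫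
            eComp V (F.obj a) (F.obj b) (H.obj b) := by
          rw [BraidedCategory.braiding_tensor_left_hom]; simp only [Category.assoc]
  · intro u v w F G H K lam mu nu _ _ _ a
    dsimp only [vcomp]
    exact hcomp' (lam a) (mu a) (nu a)
end

section
/- In the braid group B₄ with standard generators σ₁, σ₂, σ₃, the equation σ₁^l σ₃^l (σ₂σ₁σ₃σ₂)^k = σ₂ σ₁^k σ₃^k (σ₂σ₁σ₃σ₂)^l σ₂⁻¹ holds if and only if k = l. -/
open FreeGroup

/-- The braid relations for the braid group `B₄` on four strands, with
generators `σ₁ = of 0`, `σ₂ = of 1`, `σ₃ = of 2`. -/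
def braidRels4 : Set (FreeGroup (Fin 3)) :=
  { of 0 * of 1 * of 0 * (of 1 * of 0 * of 1)⁻¹,
    of 1 * of 2 * of 1 * (of 2 * of 1 * of 2)⁻¹,
    of 0 * of 2 * (of 2 * of 0)⁻¹ }

/-- The braid group on 4 strands. -/
abbrev B4 : Type := PresentedGroup braidRels4

/-- The standard generators `σ₁, σ₂, σ₃` of `B₄`. -/
def σ (i : Fin 3) : B4 := PresentedGroup.of i

lemma braid_rel_holds {r : FreeGroup (Fin 3)} (hr : r ∈ braidRels4) :
    PresentedGroup.mk braidRels4 r = 1 :=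
  (QuotientGroup.eq_one_iff r).mpr (Subgroup.subset_normalClosure hr)

lemma rel1 : σ 0 * σ 1 * σ 0 = σ 1 * σ 0 * σ 1 := by
  have h := braid_rel_holds (r := of 0 * of 1 * of 0 * (of 1 * of 0 * of 1)⁻¹)
    (by left; rfl)
  simp only [_root_.map_mul, _root_.map_inv] at h
  exact mul_inv_eq_one.mp h

lemma rel2 : σ 1 * σ 2 * σ 1 = σ 2 * σ 1 * σ 2 := by
  have h := braid_rel_holds (r := of 1 * of 2 * of 1 * (of 2 * of 1 * of 2)⁻¹)
    (by right; left; rfl)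
  simp only [_root_.map_mul, _root_.map_inv] at h
  exact mul_inv_eq_one.mp h

lemma rel3 : σ 0 * σ 2 = σ 2 * σ 0 := by
  have h := braid_rel_holds (r := of 0 * of 2 * (of 2 * of 0)⁻¹)
    (by right; right; rfl)
  simp only [_root_.map_mul, _root_.map_inv] at h
  exact mul_inv_eq_one.mp h

lemma key : σ 0 * σ 2 * (σ 1 * σ 0 * σ 2 * σ 1) = σ 1 * σ 0 * σ 2 * σ 1 * (σ 0 * σ 2) := by
  have h1 := rel1
  have h2 := rel2
  have h3 := rel3
  have L : σ 0 * σ 2 * (σ 1 * σ 0 * σ 2 * σ 1) = σ 0 * σ 1 * σ 2 * σ 0 * σ 1 * σ 0 := by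
    calc σ 0 * σ 2 * (σ 1 * σ 0 * σ 2 * σ 1)
        = σ 0 * σ 2 * σ 1 * (σ 0 * σ 2) * σ 1 := by group
      _ = σ 0 * σ 2 * σ 1 * (σ 2 * σ 0) * σ 1 := by nth_rewrite 2 [h3]; rfl
      _ = σ 0 * (σ 2 * σ 1 * σ 2) * (σ 0 * σ 1) := by group
      _ = σ 0 * (σ 1 * σ 2 * σ 1) * (σ 0 * σ 1) := by rw [← h2]
      _ = σ 0 * σ 1 * σ 2 * (σ 1 * σ 0 * σ 1) := by group
      _ = σ 0 * σ 1 * σ 2 * (σ 0 * σ 1 * σ 0) := by rw [← h1]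
      _ = σ 0 * σ 1 * σ 2 * σ 0 * σ 1 * σ 0 := by group
  have R : σ 1 * σ 0 * σ 2 * σ 1 * (σ 0 * σ 2) = σ 0 * σ 1 * σ 2 * σ 0 * σ 1 * σ 0 := by
    calc σ 1 * σ 0 * σ 2 * σ 1 * (σ 0 * σ 2)
        = σ 1 * σ 0 * σ 2 * σ 1 * (σ 2 * σ 0) := by rw [h3]
      _ = σ 1 * σ 0 * (σ 2 * σ 1 * σ 2) * σ 0 := by group
      _ = σ 1 * σ 0 * (σ 1 * σ 2 * σ 1) * σ 0 := by rw [← h2]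
      _ = (σ 1 * σ 0 * σ 1) * σ 2 * σ 1 * σ 0 := by group
      _ = (σ 0 * σ 1 * σ 0) * σ 2 * σ 1 * σ 0 := by rw [← h1]
      _ = σ 0 * σ 1 * (σ 0 * σ 2) * σ 1 * σ 0 := by group
      _ = σ 0 * σ 1 * (σ 2 * σ 0) * σ 1 * σ 0 := by rw [h3]
      _ = σ 0 * σ 1 * σ 2 * σ 0 * σ 1 * σ 0 := by group
  rw [L, R]

/-- homomorphism to ℤ (exponent sum) -/
def expSum : B4 →* Multiplicative ℤ :=
  PresentedGroup.toGroup (f := fun _ => Multiplicative.ofAdd 1)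
    (by
      intro r hr
      rcases hr with h | h | h <;> subst h <;>
        simp only [_root_.map_mul, _root_.map_inv, FreeGroup.lift_apply_of] <;> group)

@[simp] lemma expSum_σ (i : Fin 3) : expSum (σ i) = Multiplicative.ofAdd 1 :=
  PresentedGroup.toGroup.of _

/-- In `B₄`, `σ₁^l σ₃^l (σ₂σ₁σ₃σ₂)^k = σ₂ σ₁^k σ₃^k (σ₂σ₁σ₃σ₂)^l σ₂⁻¹`
holds if and only if `k = l`. -/
theorem braid_equation_iff (k l : ℤ) :
    σ 0 ^ l * σ 2 ^ l * (σ 1 * σ 0 * σ 2 * σ 1) ^ k =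
      σ 1 * (σ 0 ^ k * σ 2 ^ k * (σ 1 * σ 0 * σ 2 * σ 1) ^ l) * (σ 1)⁻¹ ↔ k = l := by
  constructor
  · intro h
    have h2 := congrArg expSum h
    simp only [_root_.map_mul, map_zpow, _root_.map_inv, expSum_σ] at h2
    have h3 := congrArg Multiplicative.toAdd h2
    simp only [toAdd_mul, toAdd_zpow, toAdd_inv, toAdd_ofAdd, smul_eq_mul, mul_one] at h3
    omega
  · rintro rfl
    set c : B4 := σ 1 * σ 0 * σ 2 * σ 1 with hc
    have hxz : Commute (σ 0) (σ 2) := rel3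
    have hxzc : Commute (σ 0 * σ 2) c := key
    have hya : Commute (σ 1) (σ 0 * σ 2 * c) := by
      show σ 1 * (σ 0 * σ 2 * c) = σ 0 * σ 2 * c * σ 1
      calc σ 1 * (σ 0 * σ 2 * c) = (σ 1 * σ 0 * σ 2 * σ 1) * (σ 0 * σ 2) * σ 1 := by
            rw [hc]; group
        _ = (σ 0 * σ 2) * (σ 1 * σ 0 * σ 2 * σ 1) * σ 1 := by rw [← key]
        _ = σ 0 * σ 2 * c * σ 1 := by rw [hc]
    have hk : σ 0 ^ k * σ 2 ^ k * c ^ k = (σ 0 * σ 2 * c) ^ k := by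
      rw [hxzc.mul_zpow, hxz.mul_zpow]
    rw [hk, (hya.zpow_right k).eq, mul_inv_cancel_right]
end

section
/- Modifying the composition of a V-monoidal category C by precomposing with the k-th power of the braiding, (-∘'-) := β^k ∘ (-∘_C-), and the tensor product by (-⊗'-) := β^l ∘ (-⊗_C-), always yields associative operations; these satisfy the braided interchange axiom (and hence yield a new V-monoidal category, the rotation) if and only if k = l. -/
open CategoryTheory MonoidalCategory

universe v u w

/-- A (strict) monoidal category enriched in a braided monoidal category `V`. -/
structure VMonCat (V : Type u) [Category.{v} V] [MonoidalCategory V]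
    [BraidedCategory V] : Type (max u v (w + 1)) where
  Obj : Type w
  Hom : Obj → Obj → V
  jj : ∀ a : Obj, 𝟙_ V ⟶ Hom a a
  comp : ∀ a b c : Obj, Hom a b ⊗ Hom b c ⟶ Hom a c
  id_comp : ∀ a b, (jj a ▷ Hom a b) ≫ comp a a b = (λ_ (Hom a b)).hom
  comp_id : ∀ a b, (Hom a b ◁ jj b) ≫ comp a b b = (ρ_ (Hom a b)).hom
  comp_assoc : ∀ a b c d,
    (comp a b c ▷ Hom c d) ≫ comp a c d =
      (α_ (Hom a b) (Hom b c) (Hom c d)).hom ≫ (Hom a b ◁ comp b c d) ≫ comp a b d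
  one : Obj
  tensorObj : Obj → Obj → Obj
  tensorHom : ∀ a b c d : Obj, Hom a c ⊗ Hom b d ⟶ Hom (tensorObj a b) (tensorObj c d)
  one_tensor : ∀ a, tensorObj one a = a
  tensor_one : ∀ a, tensorObj a one = a
  tensor_assoc : ∀ a b c, tensorObj (tensorObj a b) c = tensorObj a (tensorObj b c)
  unit_tensorHom : ∀ a b, (jj one ▷ Hom a b) ≫ tensorHom one a one b ≫
      eqToHom (by rw [one_tensor, one_tensor]) = (λ_ (Hom a b)).hom
  tensorHom_unit : ∀ a b, (Hom a b ◁ jj one) ≫ tensorHom a one b one ≫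
      eqToHom (by rw [tensor_one, tensor_one]) = (ρ_ (Hom a b)).hom
  jj_tensor : ∀ a b, (λ_ (𝟙_ V)).inv ≫ (jj a ⊗ₘ jj b) ≫ tensorHom a b a b
      = jj (tensorObj a b)
  tensorHom_assoc : ∀ a b c d e f,
    (tensorHom a b d e ▷ Hom c f) ≫ tensorHom (tensorObj a b) c (tensorObj d e) f =
      (α_ (Hom a d) (Hom b e) (Hom c f)).hom ≫ (Hom a d ◁ tensorHom b c e f) ≫
        tensorHom a (tensorObj b c) d (tensorObj e f) ≫
        eqToHom (by rw [tensor_assoc, tensor_assoc])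
  interchange : ∀ a b c d e f,
    (tensorHom a d b e ⊗ₘ tensorHom b e c f) ≫
        comp (tensorObj a d) (tensorObj b e) (tensorObj c f) =
      tensorμ (Hom a b) (Hom d e) (Hom b c) (Hom e f) ≫
        (comp a b c ⊗ₘ comp d e f) ≫ tensorHom a d c f

namespace VMonCat

variable {V : Type u} [Category.{v} V] [MonoidalCategory V] [BraidedCategory V]
variable (C : VMonCat V)

/-- Morphisms of the underlying category `C^V`. -/
def cvHom (a b : C.Obj) : Type v := 𝟙_ V ⟶ C.Hom a b

/-- Identity morphisms of `C^V`. -/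
def cvId (a : C.Obj) : C.cvHom a a := C.jj a

/-- Composition in `C^V`. -/
def cvComp {a b c : C.Obj} (f : C.cvHom a b) (g : C.cvHom b c) : C.cvHom a c :=
  (λ_ (𝟙_ V)).inv ≫ (f ⊗ₘ g) ≫ C.comp a b c

/-- Tensor product of morphisms in `C^V`. -/
def cvTensor {a b c d : C.Obj} (f : C.cvHom a c) (g : C.cvHom b d) :
    C.cvHom (C.tensorObj a b) (C.tensorObj c d) :=
  (λ_ (𝟙_ V)).inv ≫ (f ⊗ₘ g) ≫ C.tensorHom a b c d

/-- Transport of `C^V` morphisms along equalities of objects. -/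
def cvCast {a a' b b' : C.Obj} (h : a = a') (h' : b = b') (f : C.cvHom a b) :
    C.cvHom a' b' :=
  f ≫ eqToHom (by rw [h, h'])

end VMonCat

open VMonCat

section Rotation

variable {V : Type u} [Category.{v} V] [MonoidalCategory V] [BraidedCategory V]

/-- The double braiding `β_{X,Y} ≫ β_{Y,X}` as an automorphism of `X ⊗ Y`;
its `k`-th power interprets the `k`-th power of the braiding `β^k` as an
endomorphism of `X ⊗ Y`. -/
def braidAut (X Y : V) : Aut (X ⊗ Y) := β_ X Y ≪≫ β_ Y X

/-- The modified composition `-∘'- := β^k ≫ (-∘_C-)`. -/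
def rotComp (C : VMonCat V) (k : ℤ) (a b c : C.Obj) :
    C.Hom a b ⊗ C.Hom b c ⟶ C.Hom a c :=
  (braidAut (C.Hom a b) (C.Hom b c) ^ k).hom ≫ C.comp a b c

/-- The modified tensor product `-⊗'- := β^l ≫ (-⊗_C-)`. -/
def rotTensor (C : VMonCat V) (l : ℤ) (a b c d : C.Obj) :
    C.Hom a c ⊗ C.Hom b d ⟶ C.Hom (C.tensorObj a b) (C.tensorObj c d) :=
  (braidAut (C.Hom a c) (C.Hom b d) ^ l).hom ≫ C.tensorHom a b c d

end Rotation


open Functor.LaxMonoidal MonoidalOpposite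

set_option linter.unusedSectionVars false
set_option maxHeartbeats 1000000

section Helpers

variable {V : Type u} [Category.{v} V] [MonoidalCategory V] [BraidedCategory V]

theorem laxBraided_tensorμ {D : Type*} [Category D] [MonoidalCategory D] [BraidedCategory D]
    (F : V ⥤ D) [F.LaxBraided] (X₁ X₂ Y₁ Y₂ : V) :
    (μ F X₁ X₂ ⊗ₘ μ F Y₁ Y₂) ≫ μ F (X₁ ⊗ X₂) (Y₁ ⊗ Y₂) ≫ F.map (tensorμ X₁ X₂ Y₁ Y₂) =
    tensorμ (F.obj X₁) (F.obj X₂) (F.obj Y₁) (F.obj Y₂) ≫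
      (μ F X₁ Y₁ ⊗ₘ μ F X₂ Y₂) ≫ μ F (X₁ ⊗ Y₁) (X₂ ⊗ Y₂) := by
  have inner : (F.obj X₂ ◁ μ F Y₁ Y₂) ≫ μ F X₂ (Y₁ ⊗ Y₂) ≫ F.map (α_ X₂ Y₁ Y₂).inv ≫
      F.map ((β_ X₂ Y₁).hom ▷ Y₂) ≫ F.map (α_ Y₁ X₂ Y₂).hom =
      (α_ (F.obj X₂) (F.obj Y₁) (F.obj Y₂)).inv ≫ ((β_ (F.obj X₂) (F.obj Y₁)).hom ▷ F.obj Y₂) ≫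
      (α_ (F.obj Y₁) (F.obj X₂) (F.obj Y₂)).hom ≫ (F.obj Y₁ ◁ μ F X₂ Y₂) ≫ μ F Y₁ (X₂ ⊗ Y₂) := by
    slice_lhs 1 3 => rw [associativity_inv]
    slice_lhs 3 4 => rw [← μ_natural_left]
    slice_lhs 2 3 => rw [← comp_whiskerRight, Functor.LaxBraided.braided, comp_whiskerRight]
    slice_lhs 3 5 => rw [associativity]
  rw [tensorHom_def' (μ F X₁ X₂) (μ F Y₁ Y₂), tensorμ]
  simp only [Functor.map_comp, Category.assoc]
  slice_lhs 2 4 => rw [associativity]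
  slice_lhs 1 2 => rw [associator_naturality_right]
  slice_lhs 4 5 => rw [← μ_natural_right]
  slice_lhs 5 6 => rw [← μ_natural_right]
  slice_lhs 6 7 => rw [← μ_natural_right]
  slice_lhs 2 6 => rw [← MonoidalCategory.whiskerLeft_comp, ← MonoidalCategory.whiskerLeft_comp,
    ← MonoidalCategory.whiskerLeft_comp, ← MonoidalCategory.whiskerLeft_comp, inner]
  simp only [MonoidalCategory.whiskerLeft_comp, Category.assoc]
  slice_lhs 6 8 => rw [associativity_inv]
  slice_lhs 5 6 => rw [associator_inv_naturality_right]
  rw [tensorμ]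
  slice_lhs 6 7 => rw [← tensorHom_def']
  simp only [Category.assoc]

lemma Aut_one_hom {T : V} : (1 : Aut T).hom = 𝟙 T := rfl
lemma Aut_mul_hom {T : V} (a b : Aut T) : (a * b).hom = b.hom ≫ a.hom := rfl
lemma Aut_trans_hom {S T : V} (a : Aut S) (e : S ≅ T) : (a ≪≫ e).hom = a.hom ≫ e.hom := rfl

lemma hom_comm_zpow {T T' : V} {A : Aut T} {B : Aut T'} {f : T ⟶ T'}
    (h : f ≫ B.hom = A.hom ≫ f) : ∀ k : ℤ, f ≫ (B ^ k).hom = (A ^ k).hom ≫ f := by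
  have hn : ∀ n : ℕ, f ≫ (B ^ n).hom = (A ^ n).hom ≫ f := by
    intro n
    induction n with
    | zero => simp [Aut_one_hom]
    | succ n ih =>
        simp only [pow_succ, Aut_mul_hom]
        rw [← Category.assoc, h, Category.assoc, ih, ← Category.assoc]
  have hinv : ∀ n : ℕ, f ≫ ((B ^ n)⁻¹).hom = ((A ^ n)⁻¹).hom ≫ f := by
    intro n
    show f ≫ (B ^ n).inv = (A ^ n).inv ≫ f
    calc f ≫ (B ^ n).inv = (A ^ n).inv ≫ ((A ^ n).hom ≫ f) ≫ (B ^ n).inv := by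
          rw [Category.assoc, Iso.inv_hom_id_assoc (A ^ n : T ≅ T)]
      _ = (A ^ n).inv ≫ (f ≫ (B ^ n).hom) ≫ (B ^ n).inv := by rw [hn n]
      _ = (A ^ n).inv ≫ f := by rw [Category.assoc, Iso.hom_inv_id (B ^ n : T' ≅ T'), Category.comp_id]
  intro k
  obtain ⟨n⟩ | n := k
  · simpa using hn n
  · simpa [zpow_negSucc] using hinv (n + 1)

/-- Whiskering on the right as a group homomorphism on automorphisms. -/
def wrAut (X Z : V) : Aut X →* Aut (X ⊗ Z) where
  toFun e := whiskerRightIso e Z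
  map_one' := Iso.ext (by change (1 : Aut X).hom ▷ Z = 𝟙 _; simp [Aut_one_hom])
  map_mul' a b := Iso.ext (by change (a * b).hom ▷ Z = b.hom ▷ Z ≫ a.hom ▷ Z; simp [Aut_mul_hom])

/-- Whiskering on the left as a group homomorphism on automorphisms. -/
def wlAut (X Z : V) : Aut Z →* Aut (X ⊗ Z) where
  toFun e := whiskerLeftIso X e
  map_one' := Iso.ext (by change X ◁ (1 : Aut Z).hom = 𝟙 _; simp [Aut_one_hom])
  map_mul' a b := Iso.ext (by change X ◁ (a * b).hom = X ◁ b.hom ≫ X ◁ a.hom; simp [Aut_mul_hom])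

@[simp] lemma wrAut_hom (X Z : V) (e : Aut X) : ((wrAut X Z) e).hom = e.hom ▷ Z := rfl
@[simp] lemma wlAut_hom (X Z : V) (e : Aut Z) : ((wlAut X Z) e).hom = X ◁ e.hom := rfl

@[simp] lemma wrAut_zpow_hom (X Z : V) (u : Aut X) (k : ℤ) :
    (((wrAut X Z) u) ^ k).hom = (u ^ k).hom ▷ Z := by rw [← map_zpow]; rfl

@[simp] lemma wlAut_zpow_hom (X Z : V) (u : Aut Z) (k : ℤ) :
    (((wlAut X Z) u) ^ k).hom = X ◁ (u ^ k).hom := by rw [← map_zpow]; rfl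

lemma aut_commute_of_hom {T : V} {a b : Aut T} (h : a.hom ≫ b.hom = b.hom ≫ a.hom) :
    Commute a b := Iso.ext h.symm

lemma braidAut_hom (X Y : V) : (braidAut X Y).hom = (β_ X Y).hom ≫ (β_ Y X).hom := rfl

lemma braid_nat {X X' Y Y' : V} (f : X ⟶ X') (g : Y ⟶ Y') :
    (f ⊗ₘ g) ≫ (braidAut X' Y').hom = (braidAut X Y).hom ≫ (f ⊗ₘ g) := by
  simp [braidAut_hom]

lemma braid_zpow_nat {X X' Y Y' : V} (f : X ⟶ X') (g : Y ⟶ Y') (k : ℤ) :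
    (f ⊗ₘ g) ≫ (braidAut X' Y' ^ k).hom = (braidAut X Y ^ k).hom ≫ (f ⊗ₘ g) :=
  hom_comm_zpow (braid_nat f g) k

lemma braid_nat_right {X Y Y' : V} (g : Y ⟶ Y') :
    (X ◁ g) ≫ (braidAut X Y').hom = (braidAut X Y).hom ≫ (X ◁ g) := by
  simpa [id_tensorHom] using braid_nat (𝟙 X) g

lemma braid_nat_left {X X' Y : V} (f : X ⟶ X') :
    (f ▷ Y) ≫ (braidAut X' Y).hom = (braidAut X Y).hom ≫ (f ▷ Y) := by
  simpa [tensorHom_id] using braid_nat f (𝟙 Y)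

lemma braid_zpow_nat_right {X Y Y' : V} (g : Y ⟶ Y') (k : ℤ) :
    (X ◁ g) ≫ (braidAut X Y' ^ k).hom = (braidAut X Y ^ k).hom ≫ (X ◁ g) := by
  simpa [id_tensorHom] using braid_zpow_nat (𝟙 X) g k

lemma braid_zpow_nat_left {X X' Y : V} (f : X ⟶ X') (k : ℤ) :
    (f ▷ Y) ≫ (braidAut X' Y ^ k).hom = (braidAut X Y ^ k).hom ≫ (f ▷ Y) := by
  simpa [tensorHom_id] using braid_zpow_nat f (𝟙 Y) k

lemma aut_conj_transfer {S T : V} (e : S ≅ T) (x y z : Aut S) (x' y' z' : Aut T)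
    (h1 : x.hom ≫ y.hom ≫ z.hom ≫ e.hom = e.hom ≫ x'.hom ≫ y'.hom ≫ z'.hom)
    (c1 : Commute x y) (c2 : Commute x z) (c3 : Commute y z)
    (c1' : Commute x' y') (c2' : Commute x' z') (c3' : Commute y' z') (k : ℤ) :
    (x ^ k).hom ≫ (y ^ k).hom ≫ (z ^ k).hom ≫ e.hom =
      e.hom ≫ (x' ^ k).hom ≫ (y' ^ k).hom ≫ (z' ^ k).hom := by
  have e1 : e.conjAut (z * (y * x)) = z' * (y' * x') := by
    apply Iso.ext
    rw [Iso.conjAut_apply]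
    simp only [Iso.trans_hom, Aut_trans_hom, Iso.symm_hom, Aut_mul_hom, Category.assoc]
    rw [Iso.inv_comp_eq]
    simpa only [Category.assoc] using h1
  have e2 : e.conjAut (z ^ k * (y ^ k * x ^ k)) = z' ^ k * (y' ^ k * x' ^ k) := by
    rw [← c1.symm.mul_zpow, ← (c3.symm.mul_right c2.symm).mul_zpow, map_zpow, e1,
      (c3'.symm.mul_right c2'.symm).mul_zpow, c1'.symm.mul_zpow]
  have e3 := congrArg Iso.hom e2
  rw [Iso.conjAut_apply] at e3
  simp only [Iso.trans_hom, Aut_trans_hom, Iso.symm_hom, Aut_mul_hom, Category.assoc] at e3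
  rw [Iso.inv_comp_eq] at e3
  simpa only [Category.assoc] using e3

/-- The key pure-braid identity for associativity, for all powers of the double braiding. -/
lemma braidAut_assoc_zpow (k : ℤ) (X Y Z : V) :
    ((braidAut X Y ^ k).hom ▷ Z) ≫ (braidAut (X ⊗ Y) Z ^ k).hom =
    (α_ X Y Z).hom ≫ (X ◁ (braidAut Y Z ^ k).hom) ≫ (braidAut X (Y ⊗ Z) ^ k).hom ≫
      (α_ X Y Z).inv := by
  have hF : ((braidAut X Y).hom ▷ Z) ≫ (braidAut (X ⊗ Y) Z).hom ≫ (α_ X Y Z).hom =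
      (α_ X Y Z).hom ≫ (X ◁ (braidAut Y Z).hom) ≫ (braidAut X (Y ⊗ Z)).hom := by
    have hμ : ∀ X Y : V, μ (mopFunctor V ⋙ unmopFunctor V) X Y = (braidAut X Y).hom :=
      fun _ _ => rfl
    have h := Functor.LaxMonoidal.associativity (F := mopFunctor V ⋙ unmopFunctor V) X Y Z
    simp only [hμ] at h
    exact h
  have key := aut_conj_transfer (α_ X Y Z)
    (wrAut (X ⊗ Y) Z (braidAut X Y)) (braidAut (X ⊗ Y) Z) 1
    (wlAut X (Y ⊗ Z) (braidAut Y Z)) (braidAut X (Y ⊗ Z)) 1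
    (by simpa [Aut_one_hom, wrAut_hom, wlAut_hom] using hF)
    (aut_commute_of_hom (by
      simpa [wrAut_hom] using braid_nat_left (Y := Z) (braidAut X Y).hom))
    (Commute.one_right _) (Commute.one_right _)
    (aut_commute_of_hom (by
      simpa [wlAut_hom] using braid_nat_right (X := X) (braidAut Y Z).hom))
    (Commute.one_right _) (Commute.one_right _) k
  simp only [one_zpow, Aut_one_hom, Category.id_comp, wrAut_zpow_hom, wlAut_zpow_hom] at key
  rw [← cancel_mono (α_ X Y Z).hom]
  simpa using key

lemma rot_assoc_general (k : ℤ) {X Y Z P Q R : V} (m1 : X ⊗ Y ⟶ P) (m2 : P ⊗ Z ⟶ R)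
    (m3 : Y ⊗ Z ⟶ Q) (m4 : X ⊗ Q ⟶ R)
    (h : (m1 ▷ Z) ≫ m2 = (α_ X Y Z).hom ≫ (X ◁ m3) ≫ m4) :
    (((braidAut X Y ^ k).hom ≫ m1) ▷ Z) ≫ (braidAut P Z ^ k).hom ≫ m2 =
    (α_ X Y Z).hom ≫ (X ◁ ((braidAut Y Z ^ k).hom ≫ m3)) ≫ (braidAut X Q ^ k).hom ≫ m4 := by
  rw [comp_whiskerRight, MonoidalCategory.whiskerLeft_comp]
  slice_lhs 2 3 => rw [braid_zpow_nat_left m1 k]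
  slice_lhs 1 2 => rw [braidAut_assoc_zpow]
  simp only [Category.assoc]
  slice_lhs 5 6 => rw [h]
  simp only [Iso.inv_hom_id_assoc, Category.assoc]
  slice_lhs 3 4 => rw [← braid_zpow_nat_right m3 k]
  simp only [Category.assoc]

/-- `tensorμ` as an isomorphism. -/
def tensorμIso (A B C D : V) : (A ⊗ B) ⊗ (C ⊗ D) ≅ (A ⊗ C) ⊗ (B ⊗ D) where
  hom := tensorμ A B C D
  inv := tensorδ A B C D
  hom_inv_id := tensorμ_tensorδ A B C D
  inv_hom_id := tensorδ_tensorμ A B C D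

/-- The key pure-braid identity for the interchange, for all powers of the double braiding. -/
lemma braidAut_tensorμ_zpow (k : ℤ) (A B C D : V) :
    ((braidAut A B ^ k).hom ⊗ₘ (braidAut C D ^ k).hom) ≫
      (braidAut (A ⊗ B) (C ⊗ D) ^ k).hom ≫ tensorμ A B C D =
    tensorμ A B C D ≫ ((braidAut A C ^ k).hom ⊗ₘ (braidAut B D ^ k).hom) ≫
      (braidAut (A ⊗ C) (B ⊗ D) ^ k).hom := by
  have hμ : ∀ X Y : V, μ (mopFunctor V ⋙ unmopFunctor V) X Y = (braidAut X Y).hom := by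
    intro X Y
    rfl
  have hF : ((braidAut A B).hom ⊗ₘ (braidAut C D).hom) ≫
      (braidAut (A ⊗ B) (C ⊗ D)).hom ≫ tensorμ A B C D =
      tensorμ A B C D ≫ ((braidAut A C).hom ⊗ₘ (braidAut B D).hom) ≫
        (braidAut (A ⊗ C) (B ⊗ D)).hom := by
    have h := laxBraided_tensorμ (mopFunctor V ⋙ unmopFunctor V) A B C D
    simp only [hμ, Functor.comp_obj, mopFunctor_obj, unmopFunctor_obj, unmop_mop] at h
    have hmap : (mopFunctor V ⋙ unmopFunctor V).map (tensorμ A B C D) = tensorμ A B C D := rfl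
    rw [hmap] at h
    exact h
  have key := aut_conj_transfer (tensorμIso A B C D)
    (wrAut (A ⊗ B) (C ⊗ D) (braidAut A B)) (wlAut (A ⊗ B) (C ⊗ D) (braidAut C D))
    (braidAut (A ⊗ B) (C ⊗ D))
    (wrAut (A ⊗ C) (B ⊗ D) (braidAut A C)) (wlAut (A ⊗ C) (B ⊗ D) (braidAut B D))
    (braidAut (A ⊗ C) (B ⊗ D))
    (by
      simp only [wrAut_hom, wlAut_hom]
      rw [show (tensorμIso A B C D).hom = tensorμ A B C D from rfl]
      rw [← tensorHom_def_assoc, ← tensorHom_def_assoc]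
      simpa only [Category.assoc] using hF)
    (aut_commute_of_hom (by
      simp only [wrAut_hom, wlAut_hom]
      exact (whisker_exchange (braidAut A B).hom (braidAut C D).hom).symm))
    (aut_commute_of_hom (by
      simpa [wrAut_hom] using braid_nat_left (Y := C ⊗ D) (braidAut A B).hom))
    (aut_commute_of_hom (by
      simpa [wlAut_hom] using braid_nat_right (X := A ⊗ B) (braidAut C D).hom))
    (aut_commute_of_hom (by
      simp only [wrAut_hom, wlAut_hom]
      exact (whisker_exchange (braidAut A C).hom (braidAut B D).hom).symm))
    (aut_commute_of_hom (by
      simpa [wrAut_hom] using braid_nat_left (Y := B ⊗ D) (braidAut A C).hom))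
    (aut_commute_of_hom (by
      simpa [wlAut_hom] using braid_nat_right (X := A ⊗ C) (braidAut B D).hom))
    k
  simp only [wrAut_zpow_hom, wlAut_zpow_hom] at key
  rw [show (tensorμIso A B C D).hom = tensorμ A B C D from rfl] at key
  rw [tensorHom_def_assoc, tensorHom_def_assoc]
  simpa only [Category.assoc] using key

end Helpers

section Model

/-- Objects of the model braided category: integers (gradings). -/
structure MObj : Type u where
  deg : ℤ

/-- Morphisms: an integer, existing only between equal objects. -/
@[ext] structure MHom (M N : MObj.{u}) : Type v where
  val : ℤ
  eq : M = N

instance : Category.{v} MObj.{u} where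
  Hom := MHom
  id M := ⟨0, rfl⟩
  comp f g := ⟨f.val + g.val, f.eq.trans g.eq⟩
  id_comp f := MHom.ext (zero_add f.val)
  comp_id f := MHom.ext (add_zero f.val)
  assoc f g h := MHom.ext (add_assoc f.val g.val h.val)

lemma mext {M N : MObj.{u}} {f g : M ⟶ N} (h : MHom.val f = MHom.val g) : f = g :=
  MHom.ext h

@[simp] lemma MId_val (M : MObj.{u}) : (𝟙 M : MHom M M).val = 0 := rfl
@[simp] lemma MComp_val {M N P : MObj.{u}} (f : M ⟶ N) (g : N ⟶ P) :
    (f ≫ g : MHom M P).val = f.val + g.val := rfl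
@[simp] lemma MeqToHom_val {M N : MObj.{u}} (h : M = N) : (eqToHom h).val = 0 := by
  subst h; rfl

instance MStruct : MonoidalCategoryStruct MObj.{u} where
  tensorObj M N := ⟨M.deg + N.deg⟩
  whiskerLeft X _ _ f := ⟨f.val, by rw [f.eq]⟩
  whiskerRight f Y := ⟨f.val, by rw [f.eq]⟩
  tensorHom f g := ⟨f.val + g.val, by rw [f.eq, g.eq]⟩
  tensorUnit := ⟨0⟩
  associator X Y Z := {
    hom := ⟨0, by simp [add_assoc]⟩
    inv := ⟨0, by simp [add_assoc]⟩
    hom_inv_id := mext rfl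
    inv_hom_id := mext rfl }
  leftUnitor X := {
    hom := ⟨0, by cases X; simp⟩
    inv := ⟨0, by cases X; simp⟩
    hom_inv_id := mext rfl
    inv_hom_id := mext rfl }
  rightUnitor X := {
    hom := ⟨0, by cases X; simp⟩
    inv := ⟨0, by cases X; simp⟩
    hom_inv_id := mext rfl
    inv_hom_id := mext rfl }

@[simp] lemma MTensorObj_deg (M N : MObj.{u}) : (M ⊗ N : MObj).deg = M.deg + N.deg := rfl
@[simp] lemma MTensorHom_val {M N P Q : MObj.{u}} (f : M ⟶ N) (g : P ⟶ Q) :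
    (f ⊗ₘ g : MHom _ _).val = f.val + g.val := rfl
@[simp] lemma MWhiskerLeft_val (X : MObj.{u}) {M N : MObj.{u}} (f : M ⟶ N) :
    (X ◁ f : MHom _ _).val = f.val := rfl
@[simp] lemma MWhiskerRight_val {M N : MObj.{u}} (f : M ⟶ N) (Y : MObj.{u}) :
    (f ▷ Y : MHom _ _).val = f.val := rfl
@[simp] lemma MAssoc_hom_val (X Y Z : MObj.{u}) : (α_ X Y Z).hom.val = 0 := rfl
@[simp] lemma MAssoc_inv_val (X Y Z : MObj.{u}) : (α_ X Y Z).inv.val = 0 := rfl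
@[simp] lemma MLeftUnitor_hom_val (X : MObj.{u}) : (λ_ X).hom.val = 0 := rfl
@[simp] lemma MLeftUnitor_inv_val (X : MObj.{u}) : (λ_ X).inv.val = 0 := rfl
@[simp] lemma MRightUnitor_hom_val (X : MObj.{u}) : (ρ_ X).hom.val = 0 := rfl
@[simp] lemma MRightUnitor_inv_val (X : MObj.{u}) : (ρ_ X).inv.val = 0 := rfl

instance : MonoidalCategory MObj.{u} where
  toMonoidalCategoryStruct := MStruct
  tensorHom_def _ _ := mext (by simp)
  id_tensorHom_id _ _ := mext (by simp)
  tensorHom_comp_tensorHom _ _ _ _ := mext (by simp; ring)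
  whiskerLeft_id _ _ := mext (by simp)
  id_whiskerRight _ _ := mext (by simp)
  associator_naturality _ _ _ := mext (by simp; ring)
  leftUnitor_naturality _ := mext (by simp)
  rightUnitor_naturality _ := mext (by simp)
  pentagon _ _ _ _ := mext (by simp)
  triangle _ _ := mext (by simp)

instance : BraidedCategory MObj.{u} where
  braiding M N := {
    hom := ⟨M.deg * N.deg, by cases M; cases N; exact congrArg MObj.mk (add_comm _ _)⟩
    inv := ⟨-(M.deg * N.deg), by cases M; cases N; exact congrArg MObj.mk (add_comm _ _)⟩
    hom_inv_id := mext (by dsimp; ring)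
    inv_hom_id := mext (by dsimp; ring) }
  braiding_naturality_right := by
    intro X Y Z f
    obtain ⟨v, rfl⟩ := f
    exact mext (by dsimp; ring)
  braiding_naturality_left := by
    intro X Y f Z
    obtain ⟨v, rfl⟩ := f
    exact mext (by dsimp; ring)
  hexagon_forward _ _ _ := mext (by dsimp; ring)
  hexagon_reverse _ _ _ := mext (by dsimp; ring)

@[simp] lemma MBraiding_hom_val (M N : MObj.{u}) : (β_ M N).hom.val = M.deg * N.deg := rfl

@[simp] lemma MTensorμ_val (A B C D : MObj.{u}) :
    (tensorμ A B C D : MHom _ _).val = B.deg * C.deg := by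
  simp [tensorμ]

lemma MAut_zpow_val {M : MObj.{u}} (A : Aut M) (k : ℤ) :
    ((A ^ k).hom).val = k * A.hom.val := by
  let φ : Aut M →* Multiplicative ℤ :=
    { toFun := fun e => Multiplicative.ofAdd e.hom.val
      map_one' := rfl
      map_mul' := fun a b => by
        show Multiplicative.ofAdd (b.hom ≫ a.hom).val = _
        simp [← ofAdd_add, add_comm] }
  have h1 := map_zpow φ A k
  have h2 : ((A ^ k).hom).val = Multiplicative.toAdd (φ (A ^ k)) := rfl
  rw [h2, h1]
  simp [φ, toAdd_zpow]

end Model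


section ModelVMonCat

/-- The model `V`-monoidal category: objects are integers, `Hom a b` has grading `b - a`. -/
def MC : VMonCat.{v, u, w} MObj.{u} where
  Obj := ULift.{w} ℤ
  Hom a b := ⟨b.down - a.down⟩
  jj _ := ⟨0, congrArg MObj.mk (by ring)⟩
  comp _ _ _ := ⟨0, congrArg MObj.mk (by ring)⟩
  id_comp _ _ := mext (by simp)
  comp_id _ _ := mext (by simp)
  comp_assoc _ _ _ _ := mext (by simp)
  one := ⟨0⟩
  tensorObj a b := ⟨a.down + b.down⟩
  tensorHom a b c _ := ⟨b.down * (c.down - a.down), congrArg MObj.mk (by ring)⟩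
  one_tensor a := by cases a; exact congrArg ULift.up (zero_add _)
  tensor_one a := by cases a; exact congrArg ULift.up (add_zero _)
  tensor_assoc a b c := congrArg ULift.up (add_assoc _ _ _)
  unit_tensorHom _ _ := mext (by simp)
  tensorHom_unit _ _ := mext (by simp)
  jj_tensor _ _ := mext (by simp)
  tensorHom_assoc a b c d e f := mext (by simp; ring)
  interchange a b c d e f := mext (by simp; ring)

@[simp] lemma MbraidAut_zpow_val (X Y : MObj.{u}) (k : ℤ) :
    ((braidAut X Y ^ k).hom).val = k * (X.deg * Y.deg + Y.deg * X.deg) := by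
  rw [MAut_zpow_val]
  congr 1

end ModelVMonCat

/-- Modifying the composition of a `V`-monoidal category by precomposing with
the `k`-th power of the braiding, and the tensor product with the `l`-th power,
always yields associative operations; these satisfy the braided interchange
axiom (for all `V`-monoidal categories) if and only if `k = l`. -/
theorem rotation_assoc_and_interchange_iff (k l : ℤ) :
    (∀ (V : Type u) (_ : Category.{v} V) (_ : MonoidalCategory V)
      (_ : BraidedCategory V) (C : VMonCat.{v, u, w} V) (a b c d : C.Obj),
      (rotComp C k a b c ▷ C.Hom c d) ≫ rotComp C k a c d =
        (α_ (C.Hom a b) (C.Hom b c) (C.Hom c d)).hom ≫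
          (C.Hom a b ◁ rotComp C k b c d) ≫ rotComp C k a b d) ∧
    (∀ (V : Type u) (_ : Category.{v} V) (_ : MonoidalCategory V)
      (_ : BraidedCategory V) (C : VMonCat.{v, u, w} V) (a b c d e f : C.Obj),
      (rotTensor C l a b d e ▷ C.Hom c f) ≫
          rotTensor C l (C.tensorObj a b) c (C.tensorObj d e) f =
        (α_ (C.Hom a d) (C.Hom b e) (C.Hom c f)).hom ≫
          (C.Hom a d ◁ rotTensor C l b c e f) ≫
          rotTensor C l a (C.tensorObj b c) d (C.tensorObj e f) ≫
          eqToHom (by rw [C.tensor_assoc, C.tensor_assoc])) ∧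
    ((∀ (V : Type u) (_ : Category.{v} V) (_ : MonoidalCategory V)
      (_ : BraidedCategory V) (C : VMonCat.{v, u, w} V) (a b c d e f : C.Obj),
      (rotTensor C l a d b e ⊗ₘ rotTensor C l b e c f) ≫
          rotComp C k (C.tensorObj a d) (C.tensorObj b e) (C.tensorObj c f) =
        tensorμ (C.Hom a b) (C.Hom d e) (C.Hom b c) (C.Hom e f) ≫
          (rotComp C k a b c ⊗ₘ rotComp C k d e f) ≫ rotTensor C l a d c f) ↔
      k = l) := by
  refine ⟨?_, ?_, ?_, ?_⟩
  · -- associativity of the rotated composition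
    intro V instC instM instB C a b c d
    simp only [rotComp]
    exact rot_assoc_general k (C.comp a b c) (C.comp a c d) (C.comp b c d) (C.comp a b d)
      (C.comp_assoc a b c d)
  · -- associativity of the rotated tensor product
    intro V instC instM instB C a b c d e f
    simp only [rotTensor]
    have h := rot_assoc_general l (C.tensorHom a b d e)
      (C.tensorHom (C.tensorObj a b) c (C.tensorObj d e) f) (C.tensorHom b c e f)
      (C.tensorHom a (C.tensorObj b c) d (C.tensorObj e f) ≫
        eqToHom (by rw [C.tensor_assoc, C.tensor_assoc]))
      (by simpa only [Category.assoc] using C.tensorHom_assoc a b c d e f)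
    simpa only [Category.assoc] using h
  · -- forward: use the concrete model
    intro H
    have h := H MObj.{u} inferInstance inferInstance inferInstance MC.{v, u, w}
      ⟨(0 : ℤ)⟩ ⟨(1 : ℤ)⟩ ⟨(1 : ℤ)⟩ ⟨(0 : ℤ)⟩ ⟨(0 : ℤ)⟩ ⟨(1 : ℤ)⟩
    have hv := congrArg MHom.val h
    simp only [rotComp, rotTensor, MComp_val, MTensorHom_val, MTensorμ_val,
      MbraidAut_zpow_val, MC] at hv
    dsimp [MC] at hv
    have e : ∀ x y m : ℤ, (braidAut (⟨x⟩ : MObj.{u}) ⟨y⟩ ^ m).hom.val = m * (x * y + y * x) :=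
      fun x y m => MbraidAut_zpow_val _ _ m
    have e1 := e 1 0 l
    have e2 := e 0 1 l
    have e3 := e 1 1 k
    have e4 := e 1 0 k
    have e5 := e 0 1 k
    have e6 := e 1 1 l
    simp only [mul_zero, zero_mul, add_zero, mul_one] at e1 e2 e3 e4 e5 e6
    erw [e1, e3, e4, e6] at hv
    omega
  · -- backward: the rotation satisfies the interchange when k = l
    rintro rfl
    intro V instC instM instB C a b c d e f
    simp only [rotComp, rotTensor]
    calc ((braidAut (C.Hom a b) (C.Hom d e) ^ k).hom ≫ C.tensorHom a d b e ⊗ₘ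
            (braidAut (C.Hom b c) (C.Hom e f) ^ k).hom ≫ C.tensorHom b e c f) ≫
          (braidAut (C.Hom (C.tensorObj a d) (C.tensorObj b e))
            (C.Hom (C.tensorObj b e) (C.tensorObj c f)) ^ k).hom ≫
          C.comp (C.tensorObj a d) (C.tensorObj b e) (C.tensorObj c f)
        = ((braidAut (C.Hom a b) (C.Hom d e) ^ k).hom ⊗ₘ
            (braidAut (C.Hom b c) (C.Hom e f) ^ k).hom) ≫
          ((C.tensorHom a d b e ⊗ₘ C.tensorHom b e c f) ≫
            (braidAut (C.Hom (C.tensorObj a d) (C.tensorObj b e))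
              (C.Hom (C.tensorObj b e) (C.tensorObj c f)) ^ k).hom) ≫
          C.comp (C.tensorObj a d) (C.tensorObj b e) (C.tensorObj c f) := by
          rw [← tensorHom_comp_tensorHom]; simp only [Category.assoc]
      _ = ((braidAut (C.Hom a b) (C.Hom d e) ^ k).hom ⊗ₘ
            (braidAut (C.Hom b c) (C.Hom e f) ^ k).hom) ≫
          (braidAut (C.Hom a b ⊗ C.Hom d e) (C.Hom b c ⊗ C.Hom e f) ^ k).hom ≫
          (C.tensorHom a d b e ⊗ₘ C.tensorHom b e c f) ≫
          C.comp (C.tensorObj a d) (C.tensorObj b e) (C.tensorObj c f) := by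
          rw [braid_zpow_nat (C.tensorHom a d b e) (C.tensorHom b e c f) k]
          simp only [Category.assoc]
      _ = ((braidAut (C.Hom a b) (C.Hom d e) ^ k).hom ⊗ₘ
            (braidAut (C.Hom b c) (C.Hom e f) ^ k).hom) ≫
          (braidAut (C.Hom a b ⊗ C.Hom d e) (C.Hom b c ⊗ C.Hom e f) ^ k).hom ≫
          tensorμ (C.Hom a b) (C.Hom d e) (C.Hom b c) (C.Hom e f) ≫
          (C.comp a b c ⊗ₘ C.comp d e f) ≫ C.tensorHom a d c f := by
          rw [C.interchange a b c d e f]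
      _ = tensorμ (C.Hom a b) (C.Hom d e) (C.Hom b c) (C.Hom e f) ≫
          (((braidAut (C.Hom a b) (C.Hom b c) ^ k).hom ⊗ₘ
            (braidAut (C.Hom d e) (C.Hom e f) ^ k).hom) ≫
          (braidAut (C.Hom a b ⊗ C.Hom b c) (C.Hom d e ⊗ C.Hom e f) ^ k).hom) ≫
          (C.comp a b c ⊗ₘ C.comp d e f) ≫ C.tensorHom a d c f := by
          slice_lhs 1 3 => rw [braidAut_tensorμ_zpow]
          simp only [Category.assoc]
      _ = tensorμ (C.Hom a b) (C.Hom d e) (C.Hom b c) (C.Hom e f) ≫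
          ((braidAut (C.Hom a b) (C.Hom b c) ^ k).hom ⊗ₘ
            (braidAut (C.Hom d e) (C.Hom e f) ^ k).hom) ≫
          ((C.comp a b c ⊗ₘ C.comp d e f) ≫
            (braidAut (C.Hom a c) (C.Hom d f) ^ k).hom) ≫ C.tensorHom a d c f := by
          rw [braid_zpow_nat (C.comp a b c) (C.comp d e f) k]
          simp only [Category.assoc]
      _ = tensorμ (C.Hom a b) (C.Hom d e) (C.Hom b c) (C.Hom e f) ≫
          ((braidAut (C.Hom a b) (C.Hom b c) ^ k).hom ≫ C.comp a b c ⊗ₘ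
            (braidAut (C.Hom d e) (C.Hom e f) ^ k).hom ≫ C.comp d e f) ≫
          (braidAut (C.Hom a c) (C.Hom d f) ^ k).hom ≫ C.tensorHom a d c f := by
          rw [← tensorHom_comp_tensorHom]; simp only [Category.assoc]
end

section
/- Given a rigid monoidal category T and a braided oplax monoidal functor F^Z : V → Z(T) such that F := F^Z ∘ R admits a right adjoint, the category T ⫽ F — with the same objects as T, hom objects T⫽F(a → b) ∈ V determined by the adjunction V(v → T⫽F(a → b)) ≅ T(a⊗F(v) → b), identity elements j_a the mates of 1_a, and composition defined as the mate of (1_a ⊗ μ) ∘ (ε_{a→b} ⊗ 1) ∘ ε_{b→c} — has associative composition satisfying the identity axioms, i.e., is a V-enriched category. -/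
open CategoryTheory MonoidalCategory

variable {V : Type*} [Category V] [MonoidalCategory V] [BraidedCategory V]
variable {T : Type*} [Category T] [MonoidalCategory T] [RigidCategory T]

section TmodF

variable (F : V ⥤ T)
  -- oplax structure on `F` (underlying `F^Z : V → Z(T)`):
  (unitMap : F.obj (𝟙_ V) ⟶ 𝟙_ T)
  (μ : ∀ u v : V, F.obj (u ⊗ v) ⟶ F.obj u ⊗ F.obj v)
  -- half-braidings of `F^Z : V → Z(T)`:
  (e : ∀ (c : T) (v : V), c ⊗ F.obj v ≅ F.obj v ⊗ c)
  -- hom objects of `T ⫽ F` and the defining adjunction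
  -- `V(v ⟶ T⫽F(a → b)) ≅ T(a ⊗ F v ⟶ b)`:
  (Hm : T → T → V)
  (adj : ∀ (v : V) (a b : T), (v ⟶ Hm a b) ≃ (a ⊗ F.obj v ⟶ b))

/-- The counit `ε_{a→b} : a ⊗ F(T⫽F(a → b)) ⟶ b`, the mate of the identity. -/
def counit (a b : T) : a ⊗ F.obj (Hm a b) ⟶ b :=
  adj (Hm a b) a b (𝟙 (Hm a b))

/-- The identity element `j_a : 𝟙_V ⟶ T⫽F(a → a)`, the mate of `𝟙_a`. -/
def tfId (a : T) : 𝟙_ V ⟶ Hm a a :=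
  (adj (𝟙_ V) a a).symm ((a ◁ unitMap) ≫ (ρ_ a).hom)

/-- The composition of `T ⫽ F`, the mate of
`(1_a ⊗ μ) ≫ (ε_{a→b} ⊗ 1) ≫ ε_{b→c}`. -/
def tfComp (a b c : T) : Hm a b ⊗ Hm b c ⟶ Hm a c :=
  (adj (Hm a b ⊗ Hm b c) a c).symm
    ((a ◁ μ (Hm a b) (Hm b c)) ≫
      (α_ a (F.obj (Hm a b)) (F.obj (Hm b c))).inv ≫
      (counit F Hm adj a b ▷ F.obj (Hm b c)) ≫ counit F Hm adj b c)

/-- The tensor product of `T ⫽ F`, the mate of the map using the oplaxitor,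
the half-braiding (to move `F(T⫽F(a→b))` past `c`), and the counits. -/
def tfTensor (a b c d : T) : Hm a b ⊗ Hm c d ⟶ Hm (a ⊗ c) (b ⊗ d) :=
  (adj (Hm a b ⊗ Hm c d) (a ⊗ c) (b ⊗ d)).symm
    (((a ⊗ c) ◁ μ (Hm a b) (Hm c d)) ≫
      (α_ a c (F.obj (Hm a b) ⊗ F.obj (Hm c d))).hom ≫
      (a ◁ (α_ c (F.obj (Hm a b)) (F.obj (Hm c d))).inv) ≫
      (a ◁ ((e c (Hm a b)).hom ▷ F.obj (Hm c d))) ≫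
      (a ◁ (α_ (F.obj (Hm a b)) c (F.obj (Hm c d))).hom) ≫
      (α_ a (F.obj (Hm a b)) (c ⊗ F.obj (Hm c d))).inv ≫
      (counit F Hm adj a b ▷ (c ⊗ F.obj (Hm c d))) ≫
      (b ◁ counit F Hm adj c d))

/-- Given a rigid monoidal category `T` and a braided oplax monoidal functor
`F^Z : V → Z(T)` whose underlying functor `F` admits a right adjoint (giving
the adjunctions `V(v ⟶ T⫽F(a → b)) ≅ T(a ⊗ F v ⟶ b)`), the category `T ⫽ F`
with identity elements the mates of identities and composition the mate of
`(1 ⊗ μ) ≫ (ε ⊗ 1) ≫ ε` satisfies the identity and associativity axioms,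
i.e. it is a `V`-enriched category. -/
theorem tmodF_enriched_category
    -- oplax monoidal structure axioms for `F`:
    (μ_natural : ∀ {u u' v v' : V} (f : u ⟶ u') (g : v ⟶ v'),
      F.map (f ⊗ₘ g) ≫ μ u' v' = μ u v ≫ (F.map f ⊗ₘ F.map g))
    (μ_assoc : ∀ u v w : V,
      μ (u ⊗ v) w ≫ (μ u v ▷ F.obj w) ≫ (α_ (F.obj u) (F.obj v) (F.obj w)).hom =
        F.map (α_ u v w).hom ≫ μ u (v ⊗ w) ≫ (F.obj u ◁ μ v w))
    (μ_left_unit : ∀ v : V,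
      μ (𝟙_ V) v ≫ (unitMap ▷ F.obj v) ≫ (λ_ (F.obj v)).hom = F.map (λ_ v).hom)
    (μ_right_unit : ∀ v : V,
      μ v (𝟙_ V) ≫ (F.obj v ◁ unitMap) ≫ (ρ_ (F.obj v)).hom = F.map (ρ_ v).hom)
    -- half-braiding axioms for `F^Z`:
    (e_nat_c : ∀ {c c' : T} (f : c ⟶ c') (v : V),
      (f ▷ F.obj v) ≫ (e c' v).hom = (e c v).hom ≫ (F.obj v ◁ f))
    (e_nat_v : ∀ (c : T) {v v' : V} (g : v ⟶ v'),
      (c ◁ F.map g) ≫ (e c v').hom = (e c v).hom ≫ (F.map g ▷ c))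
    (e_hexagon : ∀ (b c : T) (v : V),
      (e (b ⊗ c) v).hom =
        (α_ b c (F.obj v)).hom ≫ (b ◁ (e c v).hom) ≫
          (α_ b (F.obj v) c).inv ≫ ((e b v).hom ▷ c) ≫
          (α_ (F.obj v) b c).hom)
    (braided : ∀ u v : V,
      F.map (β_ u v).hom ≫ μ v u = μ u v ≫ (e (F.obj u) v).hom)
    -- naturality of the adjunction (mate characterisations):
    (adj_spec : ∀ (v : V) (a b : T) (h : v ⟶ Hm a b),
      adj v a b h = (a ◁ F.map h) ≫ counit F Hm adj a b)
    (adj_nat : ∀ (u v : V) (a b : T) (g : u ⟶ v) (h : a ⊗ F.obj v ⟶ b),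
      (adj u a b).symm ((a ◁ F.map g) ≫ h) = g ≫ (adj v a b).symm h) :
    -- the identity axioms:
    (∀ a b : T,
      (tfId F unitMap Hm adj a ▷ Hm a b) ≫ tfComp F μ Hm adj a a b =
        (λ_ (Hm a b)).hom) ∧
    (∀ a b : T,
      (Hm a b ◁ tfId F unitMap Hm adj b) ≫ tfComp F μ Hm adj a b b =
        (ρ_ (Hm a b)).hom) ∧
    -- associativity of composition:
    (∀ a b c d : T,
      (tfComp F μ Hm adj a b c ▷ Hm c d) ≫ tfComp F μ Hm adj a c d =
        (α_ (Hm a b) (Hm b c) (Hm c d)).hom ≫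
          (Hm a b ◁ tfComp F μ Hm adj b c d) ≫ tfComp F μ Hm adj a b d) := by
  have μ_natL : ∀ {u u' : V} (f : u ⟶ u') (v : V),
      F.map (f ▷ v) ≫ μ u' v = μ u v ≫ (F.map f ▷ F.obj v) := by
    intro u u' f v
    simpa using μ_natural f (𝟙 v)
  have μ_natR : ∀ (u : V) {v v' : V} (g : v ⟶ v'),
      F.map (u ◁ g) ≫ μ u v' = μ u v ≫ (F.obj u ◁ F.map g) := by
    intro u v v' g
    simpa using μ_natural (𝟙 u) g
  have μ_assoc' : ∀ u v w : V,
      μ (u ⊗ v) w ≫ (μ u v ▷ F.obj w) =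
        F.map (α_ u v w).hom ≫ μ u (v ⊗ w) ≫ (F.obj u ◁ μ v w) ≫
          (α_ (F.obj u) (F.obj v) (F.obj w)).inv := by
    intro u v w
    rw [← cancel_mono (α_ (F.obj u) (F.obj v) (F.obj w)).hom, Category.assoc,
      Category.assoc, μ_assoc]
    simp
  have comp_spec : ∀ a b c : T,
      (a ◁ F.map (tfComp F μ Hm adj a b c)) ≫ counit F Hm adj a c =
        (a ◁ μ (Hm a b) (Hm b c)) ≫
          (α_ a (F.obj (Hm a b)) (F.obj (Hm b c))).inv ≫
          (counit F Hm adj a b ▷ F.obj (Hm b c)) ≫ counit F Hm adj b c := by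
    intro a b c
    rw [← adj_spec]
    exact (adj _ a c).apply_symm_apply _
  have id_spec : ∀ a : T,
      (a ◁ F.map (tfId F unitMap Hm adj a)) ≫ counit F Hm adj a a =
        (a ◁ unitMap) ≫ (ρ_ a).hom := by
    intro a
    rw [← adj_spec]
    exact (adj _ a a).apply_symm_apply _
  refine ⟨?_, ?_, ?_⟩
  · intro a b
    apply (adj _ a b).injective
    rw [adj_spec, adj_spec, F.map_comp, MonoidalCategory.whiskerLeft_comp,
      Category.assoc, comp_spec, ← MonoidalCategory.whiskerLeft_comp_assoc,
      μ_natL, MonoidalCategory.whiskerLeft_comp, Category.assoc,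
      associator_inv_naturality_middle_assoc, ← comp_whiskerRight_assoc,
      id_spec, ← μ_left_unit]
    monoidal
  · intro a b
    apply (adj _ a b).injective
    rw [adj_spec, adj_spec, F.map_comp, MonoidalCategory.whiskerLeft_comp,
      Category.assoc, comp_spec, ← MonoidalCategory.whiskerLeft_comp_assoc,
      μ_natR, MonoidalCategory.whiskerLeft_comp, Category.assoc,
      associator_inv_naturality_right_assoc, whisker_exchange_assoc,
      id_spec, ← μ_right_unit, ← whisker_exchange_assoc]
    monoidal
  · intro a b c d
    apply (adj _ a d).injective
    rw [adj_spec, adj_spec]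
    simp only [F.map_comp, MonoidalCategory.whiskerLeft_comp, Category.assoc]
    rw [comp_spec a c d, comp_spec a b d]
    conv_lhs =>
      rw [← MonoidalCategory.whiskerLeft_comp_assoc, μ_natL,
        MonoidalCategory.whiskerLeft_comp, Category.assoc,
        associator_inv_naturality_middle_assoc, ← comp_whiskerRight_assoc,
        comp_spec a b c]
      simp only [comp_whiskerRight, Category.assoc]
      rw [← associator_inv_naturality_middle_assoc,
        ← MonoidalCategory.whiskerLeft_comp_assoc, μ_assoc']
    conv_rhs =>
      enter [2]
      rw [← MonoidalCategory.whiskerLeft_comp_assoc, μ_natR,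
        MonoidalCategory.whiskerLeft_comp, Category.assoc,
        associator_inv_naturality_right_assoc, whisker_exchange_assoc,
        comp_spec b c d, ← whisker_exchange_assoc]
    monoidal


end TmodF
end
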